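/- arXiv:2102.09411 — 8 statements merged into one kernel-verified Lean document; each statement's English description precedes it below -/
import Mathlib

section
/- Let n ≥ 2 and let m₁, …, mₙ be integers satisfying 2m₁ ≤ m₂, 2mᵢ ≤ m_{i−1} + m_{i+1} for all 2 ≤ i ≤ n−1, and 2mₙ ≤ m_{n−1}. Then for every i with 2 ≤ i ≤ n it holds i·m_{i−1} ≤ (i−1)·mᵢ. -/
/-! With `m 0 := 0` the hypotheses say that `m` is convex on `0, …, n`, and the claim is that
the slopes `m i / i` seen from the origin are nondecreasing. More generally, for any sequence the
defect `(k + 1) * m k - k * m (k + 1)` starts at `m 0` and changes by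
`k * (2 * m k - m (k - 1) - m (k + 1)) ≤ 0` at each step. -/

theorem add_one_mul_le_mul_add_one_add_of_convex (m : ℕ → ℤ) (k : ℕ)
    (hconv : ∀ j < k, 2 * m (j + 1) ≤ m j + m (j + 2)) :
    (k + 1) * m k ≤ k * m (k + 1) + m 0 := by
  induction k with
  | zero => simp
  | succ k ih =>
    have hk := hconv k k.lt_succ_self
    have ih := ih fun j hj => hconv j (hj.trans k.lt_succ_self)
    push_cast
    nlinarith [mul_le_mul_of_nonneg_left hk (by positivity : (0 : ℤ) ≤ k + 1)]

theorem typeA_minimality_ineq_general (n : ℕ) (m : ℕ → ℤ)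
    (h1 : 2 * m 1 ≤ m 2)
    (hmid : ∀ i : ℕ, 2 ≤ i → i ≤ n - 1 → 2 * m i ≤ m (i - 1) + m (i + 1)) :
    ∀ i : ℕ, 2 ≤ i → i ≤ n → (i : ℤ) * m (i - 1) ≤ ((i : ℤ) - 1) * m i := by
  intro i hi hin
  obtain ⟨k, rfl⟩ : ∃ k, i = k + 1 := ⟨i - 1, by omega⟩
  set m₀ := Function.update m 0 0
  have hconv : ∀ j < k, 2 * m₀ (j + 1) ≤ m₀ j + m₀ (j + 2) := by
    rintro (_ | j) hj
    · simpa [m₀] using h1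
    · simpa [m₀] using hmid (j + 2) (by omega) (by omega)
  have key := add_one_mul_le_mul_add_one_add_of_convex m₀ k hconv
  simp only [m₀, Function.update_of_ne (show k ≠ 0 by omega), Function.update_of_ne k.succ_ne_zero,
    Function.update_self, add_zero] at key
  simpa using key

/-- Let `n ≥ 2` and let `m₁, …, mₙ` be integers satisfying the inequalities coming from
the minimality property for the root system `Aₙ`:
`2m₁ ≤ m₂`, `2mᵢ ≤ m_{i-1} + m_{i+1}` for `2 ≤ i ≤ n-1`, and `2mₙ ≤ m_{n-1}`.
Then `i * m_{i-1} ≤ (i-1) * mᵢ` for every `2 ≤ i ≤ n`. -/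
theorem typeA_minimality_ineq (n : ℕ) (hn : 2 ≤ n) (m : ℕ → ℤ)
    (h1 : 2 * m 1 ≤ m 2)
    (hmid : ∀ i : ℕ, 2 ≤ i → i ≤ n - 1 → 2 * m i ≤ m (i - 1) + m (i + 1))
    (hn' : 2 * m n ≤ m (n - 1)) :
    ∀ i : ℕ, 2 ≤ i → i ≤ n → (i : ℤ) * m (i - 1) ≤ ((i : ℤ) - 1) * m i :=
  typeA_minimality_ineq_general n m h1 hmid
end

section
/- Let n ≥ 4 and let m₁, …, mₙ be integers satisfying 2m₁ ≤ m₂; 2mᵢ ≤ m_{i−1} + m_{i+1} for all 2 ≤ i ≤ n−3; 2m_{n−2} ≤ m_{n−3} + m_{n−1} + mₙ; 2m_{n−1} ≤ m_{n−2}; and 2mₙ ≤ m_{n−2}. If not all of m₁, …, mₙ are zero, then m₂ ≤ −2. -/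
/-!
Extending the chain by `m₀ = 0`, the inequalities along the chain `1, …, n-2` say that the
sequence `mᵢ` is convex, so its differences increase, while the fork inequality together with the
two leg inequalities gives `m_{n-2} ≤ m_{n-3}`. Hence `m₁ ≤ m₂ - m₁ ≤ ⋯ ≤ m_{n-2} - m_{n-3} ≤ 0`.
If `m₂ ≥ -1` this pins `m₁ = m₂ ∈ {0, -1}` and makes the chain constant; the fork then rules out
`-1` and forces both legs to vanish, so every `mᵢ` is zero.
-/

open Set Order

theorem monotoneOn_sub_of_convex {f : ℕ → ℤ} {a b : ℕ}
    (hf : ∀ i, a < i → i < b → 2 * f i ≤ f (i - 1) + f (i + 1)) :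
    MonotoneOn (fun i => f (i + 1) - f i) (Ico a b) := by
  refine monotoneOn_of_le_succ ordConnected_Ico fun i _ hi hsi => ?_
  rw [succ_eq_add_one] at hsi ⊢
  have hconv := hf (i + 1) (Nat.lt_succ_of_le hi.1) hsi.2
  rw [Nat.add_sub_cancel] at hconv
  linarith

theorem eq_of_mem_Icc_of_convex {f : ℕ → ℤ} {a b : ℕ}
    (hf : ∀ i, a < i → i < b → 2 * f i ≤ f (i - 1) + f (i + 1))
    (ha : f a ≤ f (a + 1)) (hb : f b ≤ f (b - 1)) :
    ∀ i ∈ Icc a b, f i = f a := by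
  have hmono := monotoneOn_sub_of_convex hf
  rintro i ⟨hai, hib⟩
  induction i, hai using Nat.le_induction with
  | base => rfl
  | succ i hai ih =>
    have hab : a < b := by omega
    have hfirst := hmono (left_mem_Ico.2 hab) ⟨hai, by omega⟩ hai
    have hlast := hmono ⟨hai, by omega⟩ ⟨by omega, by omega⟩ (by omega : i ≤ b - 1)
    simp only [Nat.sub_add_cancel (by omega : 1 ≤ b)] at hfirst hlast
    have := ih (by omega)
    omega

/-- Let `n ≥ 4` and let `m₁, …, mₙ` be integers satisfying the inequalities coming from
the minimality property for the root system `Dₙ` (nodes `n-1` and `n` attached to `n-2`):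
`2m₁ ≤ m₂`, `2mᵢ ≤ m_{i-1} + m_{i+1}` for `2 ≤ i ≤ n-3`,
`2m_{n-2} ≤ m_{n-3} + m_{n-1} + mₙ`, `2m_{n-1} ≤ m_{n-2}` and `2mₙ ≤ m_{n-2}`.
If not all of `m₁, …, mₙ` are zero, then `m₂ ≤ -2`. -/
theorem typeD_minimality_m2_le_neg_two (n : ℕ) (hn : 4 ≤ n) (m : ℕ → ℤ)
    (h1 : 2 * m 1 ≤ m 2)
    (hmid : ∀ i : ℕ, 2 ≤ i → i ≤ n - 3 → 2 * m i ≤ m (i - 1) + m (i + 1))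
    (hfork : 2 * m (n - 2) ≤ m (n - 3) + m (n - 1) + m n)
    (hleg1 : 2 * m (n - 1) ≤ m (n - 2))
    (hleg2 : 2 * m n ≤ m (n - 2))
    (hne : ∃ i : ℕ, 1 ≤ i ∧ i ≤ n ∧ m i ≠ 0) :
    m 2 ≤ -2 := by
  by_contra! hm2
  have hconv : ∀ i, 1 < i → i < n - 2 → 2 * m i ≤ m (i - 1) + m (i + 1) :=
    fun i hi1 hi2 => hmid i hi1 (by omega)
  have hn3 : n - 3 + 1 = n - 2 := by omega
  have hlast : m (n - 2) ≤ m (n - 3) := by linarith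
  have hdiff : m 2 - m 1 ≤ m (n - 3 + 1) - m (n - 3) :=
    monotoneOn_sub_of_convex hconv ⟨le_rfl, by omega⟩ ⟨by omega, by omega⟩ (by omega)
  rw [hn3] at hdiff
  have hstart : m 2 = m 1 ∧ (m 1 = 0 ∨ m 1 = -1) := by omega
  have hchain : ∀ i ∈ Icc 1 (n - 2), m i = m 1 :=
    eq_of_mem_Icc_of_convex hconv (show m 1 ≤ m 2 by omega)
      (by rwa [show n - 2 - 1 = n - 3 by omega])
  have hvanish : m 1 = 0 ∧ m (n - 1) = 0 ∧ m n = 0 := by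
    have := hchain (n - 2) ⟨by omega, le_rfl⟩
    have := hchain (n - 3) ⟨by omega, by omega⟩
    omega
  obtain ⟨i, hi1, hin, hi⟩ := hne
  rcases (by omega : i ≤ n - 2 ∨ i = n - 1 ∨ i = n) with hi2 | rfl | rfl
  · exact hi (by rw [hchain i ⟨hi1, hi2⟩, hvanish.1])
  · exact hi hvanish.2.1
  · exact hi hvanish.2.2
end

section
/- Let m₁, …, m₆ be integers satisfying 2m₁ ≤ m₃, 2m₂ ≤ m₄, 2m₃ ≤ m₁ + m₄, 2m₄ ≤ m₂ + m₃ + m₅, 2m₅ ≤ m₄ + m₆, and 2m₆ ≤ m₅. If not all of m₁, …, m₆ are zero, then m₂ ≤ −2. -/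
/-!
Folding each arm `1—3` and `6—5` into node `4` gives `3m₃ ≤ 2m₄` and `3m₅ ≤ 2m₄`, and then the
inequality at the branch node becomes `2m₄ ≤ 3m₂`. Together with `2m₂ ≤ m₄` this forces `m₂ ≤ 0`.
If `m₂ = 0`, everything collapses to zero; if `m₂ = -1`, then `m₄ = -2`, so `m₃, m₅ ≤ -2`,
contradicting `2m₄ ≤ m₂ + m₃ + m₅`.
-/

theorem three_mul_le_two_mul_of_arm {α : Type*} [CommRing α] [LinearOrder α]
    [IsStrictOrderedRing α] {a b c : α} (ha : 2 * a ≤ b) (hb : 2 * b ≤ a + c) :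
    3 * b ≤ 2 * c := by
  linarith

/-- Inequalities coming from the minimality property for the root system `E₆`
(chain `1—3—4—5—6` with node `2` attached to node `4`):
if `2m₁ ≤ m₃`, `2m₂ ≤ m₄`, `2m₃ ≤ m₁ + m₄`, `2m₄ ≤ m₂ + m₃ + m₅`,
`2m₅ ≤ m₄ + m₆`, `2m₆ ≤ m₅` and not all of `m₁, …, m₆` are zero, then `m₂ ≤ -2`. -/
theorem typeE6_minimality_m2_le_neg_two (m1 m2 m3 m4 m5 m6 : ℤ)
    (h1 : 2 * m1 ≤ m3) (h2 : 2 * m2 ≤ m4) (h3 : 2 * m3 ≤ m1 + m4)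
    (h4 : 2 * m4 ≤ m2 + m3 + m5) (h5 : 2 * m5 ≤ m4 + m6) (h6 : 2 * m6 ≤ m5)
    (hne : ¬(m1 = 0 ∧ m2 = 0 ∧ m3 = 0 ∧ m4 = 0 ∧ m5 = 0 ∧ m6 = 0)) :
    m2 ≤ -2 := by
  have h34 : 3 * m3 ≤ 2 * m4 := three_mul_le_two_mul_of_arm h1 h3
  have h54 : 3 * m5 ≤ 2 * m4 := three_mul_le_two_mul_of_arm h6 (by linarith)
  have hbranch : 2 * m4 ≤ 3 * m2 := by linarith
  have hm2_ne_zero : m2 ≠ 0 := by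
    rintro rfl
    exact hne (by omega)
  have hm2_ne_neg_one : m2 ≠ -1 := by
    rintro rfl
    omega
  omega
end

section
/- Let m₁, …, m₇ be integers satisfying 2m₁ ≤ m₃, 2m₂ ≤ m₄, 2m₃ ≤ m₁ + m₄, 2m₄ ≤ m₂ + m₃ + m₅, 2m₅ ≤ m₄ + m₆, 2m₆ ≤ m₅ + m₇, and 2m₇ ≤ m₆. If not all of m₁, …, m₇ are zero, then m₁ ≤ −2. -/
/-!
Write `t = E₇ m` for the Cartan matrix `E₇` (Mathlib's `CartanMatrix.E₇` uses the same Bourbaki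
labelling, with node `i` at index `i - 1`), so the hypotheses say `t ≤ 0`. Since `det E₇ = 2`,
`2 m = adj(E₇) t`, and the adjugate has positive entries: its first row `(4, 4, 6, 8, 6, 4, 2)`
shows that `m₁ ≥ -1` forces `t = 0` or `t = -e₇`. The first is excluded by `m ≠ 0`, the second
by parity, since the second row `(4, 7, 8, 12, 9, 6, 3)` would give `2 m₂ = -3`.
-/

open Matrix

namespace Matrix

variable {n α : Type*} [Fintype n] [DecidableEq n]

theorem adjugate_mulVec_mulVec [CommRing α] (A : Matrix n n α) (v : n → α) :
    A.adjugate *ᵥ (A *ᵥ v) = A.det • v := by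
  rw [mulVec_mulVec, adjugate_mul, smul_mulVec, one_mulVec]

theorem eq_adjugate_of_mul_eq_det_smul_one [CommRing α] [IsDomain α] {A B : Matrix n n α}
    (hA : A.det ≠ 0) (h : B * A = A.det • 1) : B = A.adjugate := by
  have : A.det • B = A.det • A.adjugate :=
    calc A.det • B = B * (A * A.adjugate) := by rw [mul_adjugate, mul_smul_comm, mul_one]
      _ = A.det • A.adjugate := by rw [← Matrix.mul_assoc, h, smul_mul, one_mul]
  exact smul_right_injective _ hA this

end Matrix

namespace CartanMatrix

theorem adjugate_E₇ : E₇.adjugate =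
    !![4,  4,  6,  8,  6,  4, 2;
       4,  7,  8, 12,  9,  6, 3;
       6,  8, 12, 16, 12,  8, 4;
       8, 12, 16, 24, 18, 12, 6;
       6,  9, 12, 18, 15, 10, 5;
       4,  6,  8, 12, 10,  8, 4;
       2,  3,  4,  6,  5,  4, 3] :=
  (eq_adjugate_of_mul_eq_det_smul_one (by rw [E₇_det]; decide) (by rw [E₇_det]; decide)).symm

theorem apply_zero_le_neg_two_of_E₇_mulVec_nonpos {v : Fin 7 → ℤ} (hv : E₇ *ᵥ v ≤ 0)
    (hne : v ≠ 0) : v 0 ≤ -2 := by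
  have hinv := E₇.adjugate_mulVec_mulVec v
  generalize ht : E₇ *ᵥ v = t at hinv hv
  have hrow₀ : 4 * t 0 + 4 * t 1 + 6 * t 2 + 8 * t 3 + 6 * t 4 + 4 * t 5 + 2 * t 6 = 2 * v 0 := by
    simpa [adjugate_E₇, E₇_det, mulVec, dotProduct, Fin.sum_univ_succ, add_assoc]
      using congrFun hinv 0
  have hrow₁ : 4 * t 0 + 7 * t 1 + 8 * t 2 + 12 * t 3 + 9 * t 4 + 6 * t 5 + 3 * t 6 = 2 * v 1 := by
    simpa [adjugate_E₇, E₇_det, mulVec, dotProduct, Fin.sum_univ_succ, add_assoc]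
      using congrFun hinv 1
  obtain ⟨h₀, h₁, h₂, h₃, h₄, h₅, h₆⟩ :
      t 0 ≤ 0 ∧ t 1 ≤ 0 ∧ t 2 ≤ 0 ∧ t 3 ≤ 0 ∧ t 4 ≤ 0 ∧ t 5 ≤ 0 ∧ t 6 ≤ 0 :=
    ⟨hv 0, hv 1, hv 2, hv 3, hv 4, hv 5, hv 6⟩
  by_contra! hlt
  have htzero : t = 0 := by
    ext i; fin_cases i <;> simp <;> omega
  exact hne (eq_zero_of_mulVec_eq_zero (by rw [E₇_det]; decide) (ht.trans htzero))

end CartanMatrix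

open CartanMatrix in
/-- Inequalities coming from the minimality property for the root system `E₇`
(chain `1—3—4—5—6—7` with node `2` attached to node `4`):
if `2m₁ ≤ m₃`, `2m₂ ≤ m₄`, `2m₃ ≤ m₁ + m₄`, `2m₄ ≤ m₂ + m₃ + m₅`,
`2m₅ ≤ m₄ + m₆`, `2m₆ ≤ m₅ + m₇`, `2m₇ ≤ m₆` and not all of
`m₁, …, m₇` are zero, then `m₁ ≤ -2`. -/
theorem typeE7_minimality_m1_le_neg_two (m1 m2 m3 m4 m5 m6 m7 : ℤ)
    (h1 : 2 * m1 ≤ m3) (h2 : 2 * m2 ≤ m4) (h3 : 2 * m3 ≤ m1 + m4)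
    (h4 : 2 * m4 ≤ m2 + m3 + m5) (h5 : 2 * m5 ≤ m4 + m6)
    (h6 : 2 * m6 ≤ m5 + m7) (h7 : 2 * m7 ≤ m6)
    (hne : ¬(m1 = 0 ∧ m2 = 0 ∧ m3 = 0 ∧ m4 = 0 ∧ m5 = 0 ∧ m6 = 0 ∧ m7 = 0)) :
    m1 ≤ -2 := by
  refine apply_zero_le_neg_two_of_E₇_mulVec_nonpos (v := ![m1, m2, m3, m4, m5, m6, m7]) ?_ ?_
  · intro i
    fin_cases i <;> simp [E₇, mulVec, dotProduct, Fin.sum_univ_succ] <;> linarith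
  · intro h
    exact hne ⟨congrFun h 0, congrFun h 1, congrFun h 2, congrFun h 3, congrFun h 4,
      congrFun h 5, congrFun h 6⟩
end

section
/- Let m₁, …, m₈ be integers satisfying 2m₁ ≤ m₃, 2m₂ ≤ m₄, 2m₃ ≤ m₁ + m₄, 2m₄ ≤ m₂ + m₃ + m₅, 2m₅ ≤ m₄ + m₆, 2m₆ ≤ m₅ + m₇, 2m₇ ≤ m₆ + m₈, and 2m₈ ≤ m₇. Then 3m₃ ≤ 2m₄, 5m₄ ≤ 6m₅, 4m₅ ≤ 5m₆, 3m₆ ≤ 4m₇, and 2m₇ ≤ 3m₈. -/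
/-!
Read the hypotheses as `2 mᵢ ≤ ∑_{j adjacent to i} mⱼ` along the Dynkin diagram. Walking from a
leaf, a bound `p m_prev ≤ q m_cur` together with `2 m_cur ≤ m_prev + m_next` yields
`(2p - q) m_cur ≤ p m_next`. Starting from the leaf `1` this gives `3m₃ ≤ 2m₄`; at the branch
node `4` the contributions of both arms `1—3` and `2` add up to `5m₄ ≤ 6m₅`, and then the same
step runs down the long arm to node `8`.
-/

section

variable {R : Type*} [CommRing R] [PartialOrder R] [IsOrderedRing R]

theorem mul_le_mul_of_two_mul_le_add {p q r x y z : R} (hp : 0 ≤ p) (hr : r + q = 2 * p)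
    (hxy : p * x ≤ q * y) (hy : 2 * y ≤ x + z) : r * y ≤ p * z := by
  refine le_of_add_le_add_right (a := q * y) ?_
  calc r * y + q * y = p * (2 * y) := by rw [← add_mul, hr]; ring
    _ ≤ p * (x + z) := mul_le_mul_of_nonneg_left hy hp
    _ = p * x + p * z := mul_add p x z
    _ ≤ q * y + p * z := add_le_add_left hxy _
    _ = p * z + q * y := add_comm _ _

theorem mul_le_mul_of_two_mul_le_add_add {p q₁ q₂ r x₁ x₂ y z : R} (hp : 0 ≤ p)
    (hr : r + q₁ + q₂ = 2 * p) (hx₁ : p * x₁ ≤ q₁ * y) (hx₂ : p * x₂ ≤ q₂ * y)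
    (hy : 2 * y ≤ x₁ + x₂ + z) : r * y ≤ p * z := by
  refine mul_le_mul_of_two_mul_le_add hp (q := q₁ + q₂) (by rw [← hr]; ring) ?_ hy
  rw [mul_add, add_mul]
  exact add_le_add hx₁ hx₂

end

theorem typeE8_minimality_ineq_general (m1 m2 m3 m4 m5 m6 m7 m8 : ℤ)
    (h1 : 2 * m1 ≤ m3) (h2 : 2 * m2 ≤ m4) (h3 : 2 * m3 ≤ m1 + m4)
    (h4 : 2 * m4 ≤ m2 + m3 + m5) (h5 : 2 * m5 ≤ m4 + m6)
    (h6 : 2 * m6 ≤ m5 + m7) (h7 : 2 * m7 ≤ m6 + m8) :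
    3 * m3 ≤ 2 * m4 ∧ 5 * m4 ≤ 6 * m5 ∧ 4 * m5 ≤ 5 * m6 ∧
      3 * m6 ≤ 4 * m7 ∧ 2 * m7 ≤ 3 * m8 := by
  have h34 : 3 * m3 ≤ 2 * m4 :=
    mul_le_mul_of_two_mul_le_add (p := 2) (q := 1) (by norm_num) (by norm_num)
      (by rwa [one_mul]) h3
  have h45 : 5 * m4 ≤ 6 * m5 :=
    mul_le_mul_of_two_mul_le_add_add (p := 6) (q₁ := 3) (q₂ := 4) (by norm_num) (by norm_num)
      (by linarith) (by linarith) h4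
  have h56 : 4 * m5 ≤ 5 * m6 := mul_le_mul_of_two_mul_le_add (by norm_num) (by norm_num) h45 h5
  have h67 : 3 * m6 ≤ 4 * m7 := mul_le_mul_of_two_mul_le_add (by norm_num) (by norm_num) h56 h6
  exact ⟨h34, h45, h56, h67, mul_le_mul_of_two_mul_le_add (by norm_num) (by norm_num) h67 h7⟩

/-- Inequalities coming from the minimality property for the root system `E₈`
(chain `1—3—4—5—6—7—8` with node `2` attached to node `4`):
if `2m₁ ≤ m₃`, `2m₂ ≤ m₄`, `2m₃ ≤ m₁ + m₄`, `2m₄ ≤ m₂ + m₃ + m₅`,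
`2m₅ ≤ m₄ + m₆`, `2m₆ ≤ m₅ + m₇`, `2m₇ ≤ m₆ + m₈` and `2m₈ ≤ m₇`, then
`3m₃ ≤ 2m₄`, `5m₄ ≤ 6m₅`, `4m₅ ≤ 5m₆`, `3m₆ ≤ 4m₇` and `2m₇ ≤ 3m₈`. -/
theorem typeE8_minimality_ineq (m1 m2 m3 m4 m5 m6 m7 m8 : ℤ)
    (h1 : 2 * m1 ≤ m3) (h2 : 2 * m2 ≤ m4) (h3 : 2 * m3 ≤ m1 + m4)
    (h4 : 2 * m4 ≤ m2 + m3 + m5) (h5 : 2 * m5 ≤ m4 + m6)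
    (h6 : 2 * m6 ≤ m5 + m7) (h7 : 2 * m7 ≤ m6 + m8) (h8 : 2 * m8 ≤ m7) :
    3 * m3 ≤ 2 * m4 ∧ 5 * m4 ≤ 6 * m5 ∧ 4 * m5 ≤ 5 * m6 ∧
      3 * m6 ≤ 4 * m7 ∧ 2 * m7 ≤ 3 * m8 :=
  typeE8_minimality_ineq_general m1 m2 m3 m4 m5 m6 m7 m8 h1 h2 h3 h4 h5 h6 h7
end

section
/- Let m₁, …, m₈ be integers satisfying 2m₁ ≤ m₃, 2m₂ ≤ m₄, 2m₃ ≤ m₁ + m₄, 2m₄ ≤ m₂ + m₃ + m₅, 2m₅ ≤ m₄ + m₆, 2m₆ ≤ m₅ + m₇, 2m₇ ≤ m₆ + m₈, and 2m₈ ≤ m₇. If not all of m₁, …, m₈ are zero, then m₈ ≤ −2. -/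
/-!
Write `C` for the Cartan matrix of `E₈`; the hypotheses say exactly that `C m ≤ 0` componentwise.
Since `C` is unimodular, `m = C⁻¹ (C m)` with `C⁻¹` an integer matrix, and the last row of `C⁻¹`
is `(2, 3, 4, 6, 5, 4, 3, 2)`. Hence `m₈` is a combination of the nonpositive integers `(C m)ⱼ`
with coefficients at least `2`, and `C m ≠ 0` because `m ≠ 0`, so `m₈ ≤ -2`.
-/

open Matrix

section

variable {ι : Type*} [Fintype ι] [DecidableEq ι]

theorem Matrix.apply_le_neg_of_mulVec_nonpos {C N : Matrix ι ι ℤ} (hNC : N * C = 1)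
    {m : ι → ℤ} (hm : m ≠ 0) (hCm : C *ᵥ m ≤ 0) {i : ι} {k : ℤ} (hk : 0 ≤ k)
    (hNk : ∀ j, k ≤ N i j) : m i ≤ -k := by
  have hm_eq : m = N *ᵥ (C *ᵥ m) := by rw [mulVec_mulVec, hNC, one_mulVec]
  have hCm_ne : C *ᵥ m ≠ 0 := fun h => hm (by rw [hm_eq, h, mulVec_zero])
  obtain ⟨j, hj⟩ : ∃ j, (C *ᵥ m) j ≠ 0 := by
    by_contra! h
    exact hCm_ne (funext h)
  have hsum : ∑ j, (C *ᵥ m) j ≤ -1 := by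
    have hsingle := Finset.single_le_sum (f := fun j => -(C *ᵥ m) j)
      (fun j _ => neg_nonneg.2 (hCm j)) (Finset.mem_univ j)
    have := hCm j
    simp only [Finset.sum_neg_distrib, Pi.zero_apply] at hsingle this
    omega
  calc m i = ∑ j, N i j * (C *ᵥ m) j := congrFun hm_eq i
    _ ≤ ∑ j, k * (C *ᵥ m) j :=
        Finset.sum_le_sum fun j _ => mul_le_mul_of_nonpos_right (hNk j) (hCm j)
    _ = k * ∑ j, (C *ᵥ m) j := (Finset.mul_sum ..).symm
    _ ≤ -k := by nlinarith

end

def CartanMatrix.E₈Inv : Matrix (Fin 8) (Fin 8) ℤ :=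
  !![ 4,  5,  7, 10,  8,  6,  4,  2;
      5,  8, 10, 15, 12,  9,  6,  3;
      7, 10, 14, 20, 16, 12,  8,  4;
     10, 15, 20, 30, 24, 18, 12,  6;
      8, 12, 16, 24, 20, 15, 10,  5;
      6,  9, 12, 18, 15, 12,  8,  4;
      4,  6,  8, 12, 10,  8,  6,  3;
      2,  3,  4,  6,  5,  4,  3,  2]

theorem CartanMatrix.E₈Inv_mul_E₈ : CartanMatrix.E₈Inv * CartanMatrix.E₈ = 1 := by
  decide

/-- Inequalities coming from the minimality property for the root system `E₈`
(chain `1—3—4—5—6—7—8` with node `2` attached to node `4`):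
if `2m₁ ≤ m₃`, `2m₂ ≤ m₄`, `2m₃ ≤ m₁ + m₄`, `2m₄ ≤ m₂ + m₃ + m₅`,
`2m₅ ≤ m₄ + m₆`, `2m₆ ≤ m₅ + m₇`, `2m₇ ≤ m₆ + m₈`, `2m₈ ≤ m₇` and not all of
`m₁, …, m₈` are zero, then `m₈ ≤ -2`. -/
theorem typeE8_minimality_m8_le_neg_two (m1 m2 m3 m4 m5 m6 m7 m8 : ℤ)
    (h1 : 2 * m1 ≤ m3) (h2 : 2 * m2 ≤ m4) (h3 : 2 * m3 ≤ m1 + m4)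
    (h4 : 2 * m4 ≤ m2 + m3 + m5) (h5 : 2 * m5 ≤ m4 + m6)
    (h6 : 2 * m6 ≤ m5 + m7) (h7 : 2 * m7 ≤ m6 + m8) (h8 : 2 * m8 ≤ m7)
    (hne : ¬(m1 = 0 ∧ m2 = 0 ∧ m3 = 0 ∧ m4 = 0 ∧ m5 = 0 ∧ m6 = 0 ∧ m7 = 0 ∧ m8 = 0)) :
    m8 ≤ -2 := by
  set m : Fin 8 → ℤ := ![m1, m2, m3, m4, m5, m6, m7, m8]
  have hm : m ≠ 0 := fun h => hne (by simpa [m, funext_iff, Fin.forall_fin_succ] using h)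
  have hCm : CartanMatrix.E₈ *ᵥ m ≤ 0 := by
    intro j
    fin_cases j <;>
      simp [m, CartanMatrix.E₈, mulVec, dotProduct, Fin.sum_univ_eight] <;> omega
  have hrow : ∀ j, 2 ≤ CartanMatrix.E₈Inv 7 j := by decide
  exact Matrix.apply_le_neg_of_mulVec_nonpos CartanMatrix.E₈Inv_mul_E₈ hm hCm zero_le_two hrow
end

section
/- Let G be the subgroup of GL₄(𝔽₂) generated by g₁ = [[1,0,0,0],[0,1,0,0],[0,0,0,1],[0,0,1,0]] and g₂ = [[0,1,0,1],[1,0,0,0],[0,0,0,1],[1,0,1,0]]. Then G has exactly 9 conjugacy classes. -/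
/-!
The group is finite, so it is the monoid generated by `g₁` and `g₂`, and the conjugacy class of
`x` is the closure of `{x}` under conjugation by `g₁` and `g₂`. Both closures are computed by
breadth-first search, evaluated in the kernel on a bit-packed model of matrices over `𝔽₂`: the
group has 72 elements, and the conjugation orbits of 9 of them are disjoint and cover it.
-/

-- Row `i` is a bit vector whose bit `j` is the `(i, j)` entry; the kernel computes with these
-- much faster than with `Matrix (Fin n) (Fin n) (ZMod 2)`.
def BitMatrix (n : ℕ) := Fin n → BitVec n

namespace BitMatrix

variable {n : ℕ}

instance : DecidableEq (BitMatrix n) := fun a b =>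
  decidable_of_iff ((List.finRange n).all fun i => (a i).toNat == (b i).toNat) <| by
    simp only [List.all_eq_true, List.mem_finRange, beq_iff_eq, BitVec.toNat_inj, forall_const]
    exact ⟨funext, fun h _ => h ▸ rfl⟩

instance : One (BitMatrix n) := ⟨fun i => BitVec.twoPow n i⟩

def vecMul (r : BitVec n) (b : BitMatrix n) : BitVec n :=
  (List.finRange n).foldr (fun k acc => (if r[k] then b k else 0) ^^^ acc) 0

instance : Mul (BitMatrix n) := ⟨fun a b i => vecMul (a i) b⟩

theorem one_apply (i : Fin n) : (1 : BitMatrix n) i = BitVec.twoPow n i := rfl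

theorem mul_apply (a b : BitMatrix n) (i : Fin n) : (a * b) i = vecMul (a i) b := rfl

def toMatrix (a : BitMatrix n) : Matrix (Fin n) (Fin n) (ZMod 2) :=
  Matrix.of fun i j => if (a i)[j] then 1 else 0

def ofMatrix (A : Matrix (Fin n) (Fin n) (ZMod 2)) : BitMatrix n :=
  fun i => BitVec.ofFnLE fun j => A i j = 1

theorem toMatrix_ofMatrix (A : Matrix (Fin n) (Fin n) (ZMod 2)) : toMatrix (ofMatrix A) = A := by
  ext i j
  simp only [toMatrix, ofMatrix, Matrix.of_apply, Fin.getElem_fin, BitVec.getElem_ofFnLE]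
  generalize A i j = x
  fin_cases x <;> rfl

theorem ofMatrix_toMatrix (a : BitMatrix n) : ofMatrix (toMatrix a) = a := by
  funext i
  ext j hj
  simp only [toMatrix, ofMatrix, Matrix.of_apply, Fin.getElem_fin, BitVec.getElem_ofFnLE]
  by_cases h : (a i)[j] <;> simp [h]

theorem getElem_foldr_xor {ι : Type*} (l : List ι) (v : ι → BitVec n) (j : Fin n) :
    (l.foldr (fun k acc => v k ^^^ acc) 0)[j] = l.foldr (fun k acc => (v k)[j] ^^ acc) false := by
  induction l with
  | nil => simp
  | cons k l ih => simp_all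

theorem ite_foldr_xor_eq_sum {ι : Type*} (l : List ι) (p : ι → Bool) :
    (if l.foldr (fun k acc => p k ^^ acc) false then 1 else 0 : ZMod 2) =
      (l.map fun k => if p k then 1 else 0).sum := by
  induction l with
  | nil => rfl
  | cons k l ih =>
    rw [List.foldr_cons, List.map_cons, List.sum_cons, ← ih]
    cases p k <;> cases l.foldr (fun k acc => p k ^^ acc) false <;> rfl

theorem toMatrix_mul (a b : BitMatrix n) : toMatrix (a * b) = toMatrix a * toMatrix b := by
  ext i j
  simp only [toMatrix, Matrix.mul_apply, Matrix.of_apply, Fin.sum_univ_def, mul_apply, vecMul,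
    getElem_foldr_xor, ite_foldr_xor_eq_sum]
  congr 1
  refine List.map_congr_left fun k _ => ?_
  by_cases h : (a i)[k] <;> simp [h]

theorem toMatrix_one : toMatrix (1 : BitMatrix n) = 1 := by
  ext i j
  simp [toMatrix, Matrix.one_apply, one_apply, BitVec.getElem_twoPow, Fin.ext_iff, eq_comm]

theorem toMatrix_injective : Function.Injective (toMatrix (n := n)) :=
  Function.LeftInverse.injective ofMatrix_toMatrix

instance : Monoid (BitMatrix n) where
  mul_assoc a b c := toMatrix_injective <| by simp only [toMatrix_mul, mul_assoc]
  one_mul a := toMatrix_injective <| by rw [toMatrix_mul, toMatrix_one, one_mul]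
  mul_one a := toMatrix_injective <| by rw [toMatrix_mul, toMatrix_one, mul_one]

def mulEquivMatrix : BitMatrix n ≃* Matrix (Fin n) (Fin n) (ZMod 2) where
  toFun := toMatrix
  invFun := ofMatrix
  left_inv := ofMatrix_toMatrix
  right_inv := toMatrix_ofMatrix
  map_mul' := toMatrix_mul

end BitMatrix

namespace List

variable {α : Type*} [DecidableEq α] (next : α → List α)

-- A search state is `(seen, frontier)`: everything found so far, and what the last round found.
def bfsStep (p : List α × List α) : List α × List α :=
  let new := ((p.2.flatMap next).filter (· ∉ p.1)).dedup
  (p.1 ++ new, new)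

def bfs (start : List α) (n : ℕ) : List α × List α :=
  (bfsStep next)^[n] (start, start)

variable {next}

theorem bfs_invariant (start : List α) (n : ℕ) :
    (bfs next start n).2 ⊆ (bfs next start n).1 ∧
      ∀ x ∈ (bfs next start n).1, x ∉ (bfs next start n).2 → ∀ y ∈ next x,
        y ∈ (bfs next start n).1 := by
  induction n with
  | zero => exact ⟨fun _ h => h, fun _ h h' => absurd h h'⟩
  | succ n ih =>
    rw [bfs, Function.iterate_succ_apply', ← bfs]
    generalize bfs next start n = p at ih ⊢
    obtain ⟨seen, frontier⟩ := p
    refine ⟨fun x hx => mem_append_right _ hx, fun x hx hxnew y hy => ?_⟩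
    have hseen : x ∈ seen := (mem_append.1 hx).resolve_right hxnew
    by_cases hxf : x ∈ frontier
    · by_cases hys : y ∈ seen
      · exact mem_append_left _ hys
      · exact mem_append_right _ (mem_dedup.2 (mem_filter.2 ⟨mem_flatMap.2 ⟨x, hxf, hy⟩, by simpa⟩))
    · exact mem_append_left _ (ih.2 x hseen hxf y hy)

theorem subset_bfs (start : List α) (n : ℕ) : start ⊆ (bfs next start n).1 := by
  induction n with
  | zero => exact fun _ h => h
  | succ n ih =>
    rw [bfs, Function.iterate_succ_apply', ← bfs]
    exact fun x hx => mem_append_left _ (ih hx)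

theorem bfs_subset {start : List α} {S : Set α} (hstart : ∀ x ∈ start, x ∈ S)
    (hS : ∀ x ∈ S, ∀ y ∈ next x, y ∈ S) (n : ℕ) : ∀ x ∈ (bfs next start n).1, x ∈ S := by
  induction n with
  | zero => exact hstart
  | succ n ih =>
    have hfrontier := (bfs_invariant (next := next) start n).1
    rw [bfs, Function.iterate_succ_apply', ← bfs]
    intro y hy
    obtain hy | hy := mem_append.1 hy
    · exact ih y hy
    · simp only [mem_dedup, mem_filter, mem_flatMap] at hy
      obtain ⟨⟨x, hx, hy⟩, -⟩ := hy
      exact hS x (ih x (hfrontier hx)) y hy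

theorem bfs_closed {start : List α} {n : ℕ} (h : (bfs next start n).2 = []) :
    ∀ x ∈ (bfs next start n).1, ∀ y ∈ next x, y ∈ (bfs next start n).1 := fun x hx =>
  (bfs_invariant start n).2 x hx (h ▸ not_mem_nil)

def orbitReps (orbit : α → List α) (l : List α) : List α :=
  l.foldl (fun reps x => if reps.any fun r => x ∈ orbit r then reps else reps ++ [x]) []

end List

def mulNext {M : Type*} [Mul M] (gens : List M) (x : M) : List M := gens.map (x * ·)

def conjNext {M : Type*} [Mul M] (pairs : List (M × M)) (y : M) : List M :=
  pairs.map fun p => p.1 * y * p.2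

section Closure

variable {K M : Type*} [Group K] [Finite K] [Monoid M] [DecidableEq M]

theorem Submonoid.coe_closure_eq_bfs {gens : List M} {n : ℕ}
    (hn : (List.bfs (mulNext gens) [1] n).2 = []) :
    (Submonoid.closure {g | g ∈ gens} : Set M) = {x | x ∈ (List.bfs (mulNext gens) [1] n).1} := by
  refine Set.Subset.antisymm (fun x hx => ?_) (List.bfs_subset ?_ ?_ n)
  · induction hx using Submonoid.closure_induction_right with
    | one => exact List.subset_bfs _ _ (List.mem_singleton_self 1)
    | mul_right x _ g hg hx => exact List.bfs_closed hn x hx _ (List.mem_map_of_mem hg)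
  · simp
  · intro x hx y hy
    obtain ⟨g, hg, rfl⟩ := List.mem_map.1 hy
    exact mul_mem hx (Submonoid.subset_closure hg)

theorem Submonoid.closure_eq_top_of_finite {S : Set K} (hS : Subgroup.closure S = ⊤) :
    Submonoid.closure S = ⊤ := by
  rw [← Subgroup.closure_toSubmonoid_of_finite, hS, Subgroup.top_toSubmonoid]

theorem MonoidHom.range_eq_bfs_mulNext {S : Set K} (hS : Subgroup.closure S = ⊤) {f : K →* M}
    {gens : List M} (hgens : {g | g ∈ gens} = f '' S) {n : ℕ}
    (hn : (List.bfs (mulNext gens) [1] n).2 = []) :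
    Set.range f = {x | x ∈ (List.bfs (mulNext gens) [1] n).1} := by
  rw [← MonoidHom.coe_mrange, MonoidHom.mrange_eq_map, ← Submonoid.closure_eq_top_of_finite hS,
    MonoidHom.map_mclosure, ← hgens, Submonoid.coe_closure_eq_bfs hn]

theorem MonoidHom.image_conjugatesOf_eq_bfs_conjNext {S : Set K} (hS : Subgroup.closure S = ⊤)
    {f : K →* M} {pairs : List (M × M)} (hgens : {g | g ∈ pairs.map Prod.fst} = f '' S)
    (hinv : ∀ p ∈ pairs, p.1 * p.2 = 1) (k : K) {n : ℕ}
    (hn : (List.bfs (conjNext pairs) [f k] n).2 = []) :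
    f '' conjugatesOf k = {y | y ∈ (List.bfs (conjNext pairs) [f k] n).1} := by
  have hpair : ∀ p ∈ pairs, ∀ s, f s = p.1 → p.2 = f s⁻¹ := fun p hp s hs =>
    (left_inv_eq_right_inv (by rw [← map_mul, inv_mul_cancel, map_one]) (hs ▸ hinv p hp)).symm
  have hpair_mem : ∀ s ∈ S, ∃ p ∈ pairs, p = (f s, f s⁻¹) := fun s hs => by
    obtain ⟨p, hp, hps⟩ := List.mem_map.1 (hgens.symm ▸ Set.mem_image_of_mem f hs :
      f s ∈ {g | g ∈ pairs.map Prod.fst})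
    exact ⟨p, hp, Prod.ext hps (hpair p hp s hps.symm)⟩
  refine Set.Subset.antisymm ?_ (List.bfs_subset ?_ ?_ n)
  · rintro _ ⟨k', hk', rfl⟩
    obtain ⟨c, rfl⟩ := isConj_iff.1 hk'
    have hc : c ∈ Submonoid.closure S := Submonoid.closure_eq_top_of_finite hS ▸ Submonoid.mem_top c
    induction hc using Submonoid.closure_induction_left with
    | one => simpa using List.subset_bfs _ _ (List.mem_singleton_self (f k))
    | mul_left s hs c _ ih =>
      obtain ⟨p, hp, rfl⟩ := hpair_mem s hs
      refine List.bfs_closed hn _ (ih (isConj_iff.2 ⟨c, rfl⟩)) _ (List.mem_map.2 ⟨_, hp, ?_⟩)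
      simp only [mul_inv_rev, map_mul, mul_assoc]
  · simpa using ⟨k, IsConj.refl k, rfl⟩
  · rintro _ ⟨k', hk', rfl⟩ y hy
    obtain ⟨p, hp, rfl⟩ := List.mem_map.1 hy
    obtain ⟨s, hs, hsp⟩ := (hgens ▸ List.mem_map_of_mem (f := Prod.fst) hp : p.1 ∈ f '' S)
    refine ⟨s * k' * s⁻¹, hk'.trans (isConj_iff.2 ⟨s, rfl⟩), ?_⟩
    rw [map_mul, map_mul, hsp, ← hpair p hp s hsp]

end Closure

open Finset in
theorem card_conjClasses_eq_card {K M : Type*} [Group K] {f : K → M} (hf : Function.Injective f)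
    (orbit : M → Set M) (R : Finset M) (hR : ∀ r ∈ R, r ∈ Set.range f)
    (horbit : ∀ k, f k ∈ R → f '' conjugatesOf k = orbit (f k))
    (hdisj : ∀ r ∈ R, ∀ r' ∈ R, r' ∈ orbit r → r = r') (hcover : ∀ k, ∃ r ∈ R, f k ∈ orbit r) :
    Nat.card (ConjClasses K) = #R := by
  choose pre hpre using hR
  have horbit' : ∀ r (hr : r ∈ R), f '' conjugatesOf (pre r hr) = orbit r := fun r hr => by
    rw [horbit _ (by rwa [hpre]), hpre]
  rw [← Nat.card_eq_finsetCard]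
  refine (Nat.card_eq_of_bijective (fun r : R => ConjClasses.mk (pre r r.2)) ⟨?_, ?_⟩).symm
  · rintro ⟨r, hr⟩ ⟨r', hr'⟩ h
    have hconj : pre r' hr' ∈ conjugatesOf (pre r hr) := ConjClasses.mk_eq_mk_iff_isConj.1 h
    have := horbit' r hr ▸ Set.mem_image_of_mem f hconj
    exact Subtype.ext (hdisj r hr r' hr' (hpre r' hr' ▸ this))
  · intro c
    obtain ⟨k, rfl⟩ := ConjClasses.mk_surjective c
    obtain ⟨r, hr, hk⟩ := hcover k
    obtain ⟨k', hk', hkk'⟩ := (horbit' r hr).symm ▸ hk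
    exact ⟨⟨r, hr⟩, ConjClasses.mk_eq_mk_iff_isConj.2 (hf hkk' ▸ hk')⟩

open Finset in
theorem card_conjClasses_eq_of_bfs {K M : Type*} [Group K] [Finite K] [Monoid M] [DecidableEq M]
    {S : Set K} (hS : Subgroup.closure S = ⊤) {f : K →* M} (hf : Function.Injective f)
    {pairs : List (M × M)} (hgens : {g | g ∈ pairs.map Prod.fst} = f '' S)
    (hinv : ∀ p ∈ pairs, p.1 * p.2 = 1) {n m : ℕ} (R : Finset M)
    (hn : (List.bfs (mulNext (pairs.map Prod.fst)) [1] n).2 = [])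
    (hR : ∀ r ∈ R, r ∈ (List.bfs (mulNext (pairs.map Prod.fst)) [1] n).1 ∧
      (List.bfs (conjNext pairs) [r] m).2 = [] ∧
      ∀ r' ∈ R, r' ∈ (List.bfs (conjNext pairs) [r] m).1 → r = r')
    (hcover : ∀ x ∈ (List.bfs (mulNext (pairs.map Prod.fst)) [1] n).1,
      ∃ r ∈ R, x ∈ (List.bfs (conjNext pairs) [r] m).1) :
    Nat.card (ConjClasses K) = #R := by
  have hrange := f.range_eq_bfs_mulNext hS hgens hn
  refine card_conjClasses_eq_card hf (fun x => {y | y ∈ (List.bfs (conjNext pairs) [x] m).1}) R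
    (fun r hr => hrange ▸ (hR r hr).1) (fun k hk => ?_) (fun r hr => (hR r hr).2.2)
    (fun k => hcover (f k) (hrange.subset (Set.mem_range_self k)))
  exact f.image_conjugatesOf_eq_bfs_conjNext hS hgens hinv k (hR _ hk).2.1

namespace O_disc_U2_U2

open BitMatrix

abbrev gensWithInv : List (BitMatrix 4 × BitMatrix 4) :=
  [(ofMatrix !![1,0,0,0; 0,1,0,0; 0,0,0,1; 0,0,1,0],
    ofMatrix !![1,0,0,0; 0,1,0,0; 0,0,0,1; 0,0,1,0]),
   (ofMatrix !![0,1,0,1; 1,0,0,0; 0,0,0,1; 1,0,1,0],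
    ofMatrix !![0,1,0,0; 1,0,1,0; 0,1,0,1; 0,0,1,0])]

-- Every element is a product of at most 9 generators, and every conjugate of `x` is reached from
-- `x` by at most 8 conjugations by generators.
def elements : List (BitMatrix 4) × List (BitMatrix 4) :=
  List.bfs (mulNext (gensWithInv.map Prod.fst)) [1] 10

def conjClass (x : BitMatrix 4) : List (BitMatrix 4) × List (BitMatrix 4) :=
  List.bfs (conjNext gensWithInv) [x] 9

def classReps : Finset (BitMatrix 4) :=
  (elements.1.orbitReps fun x => (conjClass x).1).toFinset

theorem gensWithInv_mul_eq_one : ∀ p ∈ gensWithInv, p.1 * p.2 = 1 := by decide +kernel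

theorem elements_frontier : elements.2 = [] := by decide +kernel

theorem classReps_spec : ∀ r ∈ classReps, r ∈ elements.1 ∧ (conjClass r).2 = [] ∧
    ∀ r' ∈ classReps, r' ∈ (conjClass r).1 → r = r' := by
  decide +kernel

theorem classReps_cover : ∀ x ∈ elements.1, ∃ r ∈ classReps, x ∈ (conjClass r).1 := by
  decide +kernel

theorem card_classReps : classReps.card = 9 := by decide +kernel

end O_disc_U2_U2

open O_disc_U2_U2 in
/-- The subgroup of `GL₄(𝔽₂)` generated by the matrices
`g₁ = [[1,0,0,0],[0,1,0,0],[0,0,0,1],[0,0,1,0]]` and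
`g₂ = [[0,1,0,1],[1,0,0,0],[0,0,0,1],[1,0,1,0]]` has exactly `9` conjugacy classes. -/
theorem conjClasses_O_disc_U2_U2 (g₁ g₂ : GL (Fin 4) (ZMod 2))
    (hg₁ : (g₁ : Matrix (Fin 4) (Fin 4) (ZMod 2)) =
      !![1,0,0,0; 0,1,0,0; 0,0,0,1; 0,0,1,0])
    (hg₂ : (g₂ : Matrix (Fin 4) (Fin 4) (ZMod 2)) =
      !![0,1,0,1; 1,0,0,0; 0,0,0,1; 1,0,1,0]) :
    Nat.card (ConjClasses (Subgroup.closure ({g₁, g₂} : Set (GL (Fin 4) (ZMod 2))))) = 9 := by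
  set H := Subgroup.closure ({g₁, g₂} : Set (GL (Fin 4) (ZMod 2)))
  let f : H →* BitMatrix 4 :=
    (BitMatrix.mulEquivMatrix.symm.toMonoidHom.comp (Units.coeHom _)).comp H.subtype
  have hf : Function.Injective f :=
    BitMatrix.mulEquivMatrix.symm.injective.comp (Units.val_injective.comp Subtype.val_injective)
  have hgens : {g | g ∈ gensWithInv.map Prod.fst} = f '' (((↑) : H → _) ⁻¹' {g₁, g₂}) := by
    rw [MonoidHom.coe_comp, Set.image_comp, Subgroup.coe_subtype,
      Set.image_preimage_eq_of_subset (by rw [Subtype.range_coe]; exact Subgroup.subset_closure),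
      Set.image_pair]
    ext g
    simp [BitMatrix.mulEquivMatrix, hg₁, hg₂]
  rw [← card_classReps]
  exact card_conjClasses_eq_of_bfs Subgroup.closure_closure_coe_preimage hf hgens
    gensWithInv_mul_eq_one classReps elements_frontier classReps_spec classReps_cover
end

section
/- Let G be the subgroup of GL₄(𝔽₂) generated by g₁ = [[1,0,0,0],[0,1,0,0],[0,0,0,1],[0,0,1,0]] and g₂ = [[0,1,0,1],[1,0,0,0],[0,0,0,1],[1,0,1,0]], and let h₄ = [[0,0,0,1],[0,0,1,0],[1,0,0,0],[0,1,0,0]] and h₂ = [[0,0,1,0],[0,0,0,1],[1,0,0,0],[0,1,0,0]]. Then h₄ and h₂ belong to G, every element of G of order 4 is conjugate in G to h₄, and h₄² is not conjugate in G to h₂. -/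
/-!
The group `G = ⟨g₁, g₂⟩` has order 72 and is small enough to be listed outright: a breadth-first
search over right multiplication by the generators produces a list of products of `g₁, g₂` which
is closed under right multiplication by them, hence equal to `G`. A direct search over
that list conjugates each of its 18 elements of order 4 to `h₄ = g₁ g₂³`.

For `h₄²` and `h₂ = h₄ g₁` an invariant is used instead: `G` preserves the discriminant quadratic
form `q = x₀x₁ + x₂x₃` of `U(2)²`, `h₄²` fixes the nonsingular vector `e₀ + e₁`, and every vector
fixed by `h₂` is singular.
-/

open Matrix

section BreadthFirstSearch

variable {M : Type*} [Monoid M]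

def bfsRightMul [DecidableEq M] (gens : List M) : ℕ → List M → List M → List M
  | 0, _, seen => seen
  | n + 1, frontier, seen =>
    let new := ((frontier.flatMap fun x => gens.map (x * ·)).filter (· ∉ seen)).dedup
    bfsRightMul gens n new (new ++ seen)

theorem mem_bfsRightMul_of_mem_seen [DecidableEq M] {gens : List M} {x : M} :
    ∀ {n : ℕ} {frontier seen : List M}, x ∈ seen → x ∈ bfsRightMul gens n frontier seen
  | 0, _, _, h => h
  | _ + 1, _, _, h => by
    rw [bfsRightMul]
    exact mem_bfsRightMul_of_mem_seen (List.mem_append_right _ h)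

theorem mem_of_mem_bfsRightMul [DecidableEq M] {gens : List M} {S : Submonoid M}
    (hgens : ∀ g ∈ gens, g ∈ S) :
    ∀ {n : ℕ} {frontier seen : List M}, (∀ x ∈ frontier, x ∈ S) → (∀ x ∈ seen, x ∈ S) →
      ∀ x ∈ bfsRightMul gens n frontier seen, x ∈ S
  | 0, _, _, _, hseen => hseen
  | _ + 1, frontier, seen, hfrontier, hseen => by
    have hnew : ∀ y ∈ ((frontier.flatMap fun x => gens.map (x * ·)).filter (· ∉ seen)).dedup,
        y ∈ S := by
      simp only [List.mem_dedup, List.mem_filter, List.mem_flatMap, List.mem_map]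
      rintro _ ⟨⟨x, hx, g, hg, rfl⟩, -⟩
      exact mul_mem (hfrontier x hx) (hgens g hg)
    rw [bfsRightMul]
    exact mem_of_mem_bfsRightMul hgens hnew fun y hy =>
      (List.mem_append.1 hy).elim (hnew y) (hseen y)

theorem mem_of_mem_mclosure_of_mul_mem {gens L : List M} (hone : 1 ∈ L)
    (hmul : ∀ x ∈ L, ∀ g ∈ gens, x * g ∈ L) {x : M}
    (hx : x ∈ Submonoid.closure {g | g ∈ gens}) : x ∈ L := by
  induction hx using Submonoid.closure_induction_right with
  | one => exact hone
  | mul_right x _ g hg ih => exact hmul x ih g hg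

theorem mem_mclosure_iff_mem_bfsRightMul [DecidableEq M] {gens : List M} {n : ℕ}
    (hclosed : ∀ x ∈ bfsRightMul gens n [1] [1], ∀ g ∈ gens, x * g ∈ bfsRightMul gens n [1] [1])
    {x : M} : x ∈ Submonoid.closure {g | g ∈ gens} ↔ x ∈ bfsRightMul gens n [1] [1] := by
  have hone : ∀ y ∈ [(1 : M)], y ∈ Submonoid.closure {g | g ∈ gens} := by simp
  exact ⟨mem_of_mem_mclosure_of_mul_mem (mem_bfsRightMul_of_mem_seen (by simp)) hclosed,
    mem_of_mem_bfsRightMul (fun g hg => Submonoid.subset_closure hg) hone hone x⟩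

end BreadthFirstSearch

theorem Units.mem_mclosure_image_val_iff {M : Type*} [Monoid M] [Finite Mˣ] {s : Set Mˣ}
    {x : M} : x ∈ Submonoid.closure (Units.val '' s) ↔ ∃ u ∈ Subgroup.closure s, (u : M) = x := by
  change x ∈ Submonoid.closure (Units.coeHom M '' s) ↔ _
  rw [← MonoidHom.map_mclosure, ← Subgroup.closure_toSubmonoid_of_finite]
  rfl

theorem Units.mem_closure_iff_val_mem_mclosure {M : Type*} [Monoid M] [Finite Mˣ] {s : Set Mˣ}
    {u : Mˣ} : u ∈ Subgroup.closure s ↔ (u : M) ∈ Submonoid.closure (Units.val '' s) := by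
  rw [Units.mem_mclosure_image_val_iff]
  exact ⟨fun hu => ⟨u, hu, rfl⟩, fun ⟨v, hv, hvu⟩ => Units.ext hvu ▸ hv⟩

def Matrix.isometrySubmonoid {n R : Type*} [Fintype n] [DecidableEq n] [CommSemiring R]
    (Q : (n → R) → R) : Submonoid (Matrix n n R) where
  carrier := {A | ∀ v, Q (A *ᵥ v) = Q v}
  mul_mem' {A B} hA hB v := by rw [← mulVec_mulVec, hA, hB]
  one_mem' v := by simp

theorem Matrix.eq_zero_of_isometry_intertwines {n R : Type*} [Fintype n] [DecidableEq n]
    [CommSemiring R] {Q : (n → R) → R} {A S T : Matrix n n R}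
    (hA : A ∈ Matrix.isometrySubmonoid Q) (hAST : A * S = T * A)
    (hT : ∀ w, T *ᵥ w = w → Q w = 0) {v : n → R} (hv : S *ᵥ v = v) : Q v = 0 := by
  rw [← show Q (A *ᵥ v) = Q v from hA v]
  exact hT _ (by rw [mulVec_mulVec, ← hAST, ← mulVec_mulVec, hv])

namespace DiscriminantU2U2

abbrev Mat := Matrix (Fin 4) (Fin 4) (ZMod 2)

def gen₁ : Mat := !![1,0,0,0; 0,1,0,0; 0,0,0,1; 0,0,1,0]
def gen₂ : Mat := !![0,1,0,1; 1,0,0,0; 0,0,0,1; 1,0,1,0]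
def rot : Mat := !![0,0,0,1; 0,0,1,0; 1,0,0,0; 0,1,0,0]
def swap : Mat := !![0,0,1,0; 0,0,0,1; 1,0,0,0; 0,1,0,0]

-- Nine rounds of the search reach every element; only the closedness check relies on this.
def elements : List Mat := bfsRightMul [gen₁, gen₂] 9 [1] [1]

-- The statements checked by the kernel are phrased with `List.all`: for `∀ x ∈ elements` instance
-- search would pick the decision procedure that runs over all 2¹⁶ matrices.
theorem mem_mclosure_iff_mem_elements {x : Mat} :
    x ∈ Submonoid.closure {gen₁, gen₂} ↔ x ∈ elements := by
  have hclosed : elements.all fun x => [gen₁, gen₂].all fun g => x * g ∈ elements := by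
    decide +kernel
  simp only [List.all_eq_true, decide_eq_true_eq] at hclosed
  have hgens : ({g | g ∈ [gen₁, gen₂]} : Set Mat) = {gen₁, gen₂} := by ext; simp
  rw [← hgens]
  exact mem_mclosure_iff_mem_bfsRightMul hclosed

theorem exists_conj_rot_of_orderOf_eq_four {x : Mat} (hx : x ∈ elements) (hord : orderOf x = 4) :
    ∃ c ∈ elements, c * rot = x * c := by
  have h : elements.all fun x => x ^ 4 = 1 → x ^ 2 ≠ 1 → elements.any fun c => c * rot = x * c := by
    decide +kernel
  simp only [List.all_eq_true, List.any_eq_true, decide_eq_true_eq] at h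
  have hx4 := pow_orderOf_eq_one x
  rw [hord] at hx4
  exact h x hx hx4 (pow_ne_one_of_lt_orderOf two_ne_zero (by omega))

theorem rot_eq : rot = gen₁ * gen₂ ^ 3 := by decide

theorem swap_eq : swap = rot * gen₁ := by decide

def discQuad (v : Fin 4 → ZMod 2) : ZMod 2 := v 0 * v 1 + v 2 * v 3

theorem mclosure_le_isometrySubmonoid :
    Submonoid.closure {gen₁, gen₂} ≤ Matrix.isometrySubmonoid discQuad := by
  rw [Submonoid.closure_le, Set.insert_subset_iff, Set.singleton_subset_iff]
  exact ⟨show ∀ v, _ = _ by decide, show ∀ v, _ = _ by decide⟩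

theorem discQuad_eq_zero_of_swap_mulVec_eq : ∀ w, swap *ᵥ w = w → discQuad w = 0 := by decide

theorem isometry_mul_rot_sq_ne {A : Mat} (hA : A ∈ Matrix.isometrySubmonoid discQuad) :
    A * rot ^ 2 ≠ swap * A := fun h =>
  absurd (Matrix.eq_zero_of_isometry_intertwines hA h discQuad_eq_zero_of_swap_mulVec_eq
    (v := ![1, 1, 0, 0]) (by decide)) (by decide)

theorem mem_closure_iff_val_mem_mclosure {g₁ g₂ u : GL (Fin 4) (ZMod 2)}
    (hg₁ : (g₁ : Mat) = gen₁) (hg₂ : (g₂ : Mat) = gen₂) :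
    u ∈ Subgroup.closure {g₁, g₂} ↔ (u : Mat) ∈ Submonoid.closure {gen₁, gen₂} := by
  rw [Units.mem_closure_iff_val_mem_mclosure, Set.image_pair, hg₁, hg₂]

theorem exists_mem_closure_val_eq_of_mem_elements {g₁ g₂ : GL (Fin 4) (ZMod 2)}
    (hg₁ : (g₁ : Mat) = gen₁) (hg₂ : (g₂ : Mat) = gen₂) {c : Mat} (hc : c ∈ elements) :
    ∃ u ∈ Subgroup.closure {g₁, g₂}, (u : Mat) = c := by
  rwa [← Units.mem_mclosure_image_val_iff, Set.image_pair, hg₁, hg₂,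
    mem_mclosure_iff_mem_elements]

end DiscriminantU2U2

open DiscriminantU2U2 in
/-- Let `G` be the subgroup of `GL₄(𝔽₂)` generated by
`g₁ = [[1,0,0,0],[0,1,0,0],[0,0,0,1],[0,0,1,0]]` and
`g₂ = [[0,1,0,1],[1,0,0,0],[0,0,0,1],[1,0,1,0]]`, and let
`h₄ = [[0,0,0,1],[0,0,1,0],[1,0,0,0],[0,1,0,0]]` and
`h₂ = [[0,0,1,0],[0,0,0,1],[1,0,0,0],[0,1,0,0]]`.
Then `h₄, h₂ ∈ G`, every element of `G` of order `4` is conjugate to `h₄` by an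
element of `G`, and `h₄²` is not conjugate to `h₂` by an element of `G`. -/
theorem order_four_conjugacy_O_disc_U2_U2 (g₁ g₂ h₄ h₂ : GL (Fin 4) (ZMod 2))
    (hg₁ : (g₁ : Matrix (Fin 4) (Fin 4) (ZMod 2)) =
      !![1,0,0,0; 0,1,0,0; 0,0,0,1; 0,0,1,0])
    (hg₂ : (g₂ : Matrix (Fin 4) (Fin 4) (ZMod 2)) =
      !![0,1,0,1; 1,0,0,0; 0,0,0,1; 1,0,1,0])
    (hh₄ : (h₄ : Matrix (Fin 4) (Fin 4) (ZMod 2)) =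
      !![0,0,0,1; 0,0,1,0; 1,0,0,0; 0,1,0,0])
    (hh₂ : (h₂ : Matrix (Fin 4) (Fin 4) (ZMod 2)) =
      !![0,0,1,0; 0,0,0,1; 1,0,0,0; 0,1,0,0]) :
    h₄ ∈ Subgroup.closure ({g₁, g₂} : Set (GL (Fin 4) (ZMod 2))) ∧
    h₂ ∈ Subgroup.closure ({g₁, g₂} : Set (GL (Fin 4) (ZMod 2))) ∧
    (∀ x ∈ Subgroup.closure ({g₁, g₂} : Set (GL (Fin 4) (ZMod 2))), orderOf x = 4 →
      ∃ c ∈ Subgroup.closure ({g₁, g₂} : Set (GL (Fin 4) (ZMod 2))),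
        c * h₄ * c⁻¹ = x) ∧
    ¬ ∃ c ∈ Subgroup.closure ({g₁, g₂} : Set (GL (Fin 4) (ZMod 2))),
        c * (h₄ ^ 2) * c⁻¹ = h₂ := by
  have hh₄g : h₄ = g₁ * g₂ ^ 3 := Units.ext (by push_cast; rw [hh₄, hg₁, hg₂]; exact rot_eq)
  have hh₂g : h₂ = h₄ * g₁ := Units.ext (by push_cast; rw [hh₂, hh₄, hg₁]; exact swap_eq)
  have hg₁G : g₁ ∈ Subgroup.closure {g₁, g₂} := Subgroup.subset_closure (by simp)
  have hg₂G : g₂ ∈ Subgroup.closure {g₁, g₂} := Subgroup.subset_closure (by simp)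
  have hh₄G : h₄ ∈ Subgroup.closure {g₁, g₂} := hh₄g ▸ mul_mem hg₁G (pow_mem hg₂G 3)
  refine ⟨hh₄G, hh₂g ▸ mul_mem hh₄G hg₁G, ?_, ?_⟩
  · intro x hx hord
    obtain ⟨c, hc, hcx⟩ := exists_conj_rot_of_orderOf_eq_four
      (mem_mclosure_iff_mem_elements.1 ((mem_closure_iff_val_mem_mclosure hg₁ hg₂).1 hx))
      (orderOf_units.trans hord)
    obtain ⟨u, hu, rfl⟩ := exists_mem_closure_val_eq_of_mem_elements hg₁ hg₂ hc
    exact ⟨u, hu, mul_inv_eq_of_eq_mul (Units.ext (by push_cast; rw [hh₄]; exact hcx))⟩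
  · rintro ⟨c, hc, hconj⟩
    refine isometry_mul_rot_sq_ne
      (mclosure_le_isometrySubmonoid ((mem_closure_iff_val_mem_mclosure hg₁ hg₂).1 hc)) ?_
    have h := congrArg Units.val (eq_mul_of_mul_inv_eq hconj)
    push_cast [hh₄, hh₂] at h
    exact h
end
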